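/- Let Λ > 0, κ > 0, R > 0 and h ∈ C¹([0,R]); set M := sup_{0≤s≤R}|h'(s)| and K := exp(κ M² R² / 16). Define h̄(r) = (1/r)∫₀ʳ h(s) ds (with h̄(0) = h(0)), f(r) = exp((κ/2)∫₀ʳ (h − h̄)²/s ds), f̃(r) = (1/r)∫₀ʳ f(s) ds − (Λ/r)∫₀ʳ f(s) s² ds, and G(r) = (1/(2r))[(f(r) − f̃(r)) − Λ f(r) r²] for 0 < r ≤ R. If K κ M² / 16 ≤ Λ/3, then G(r) ≤ −(Λ/6) r for every 0 < r ≤ R. -/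

import Mathlib

/-!
Since `|h'| ≤ M`, `h` is `M`-Lipschitz, so `|h(s) − h̄(s)| ≤ M s / 2`: the integrand
`(h − h̄)² / s` of the exponent of `f` is at most `M² s / 4`, and the exponent at `r` is at most
`κ M² r² / 16`. Hence `f ≥ 1` is nondecreasing and, by `eˣ − 1 ≤ x eˣ`,
`f(r) − 1 ≤ K κ M² r² / 16 ≤ Λ r² / 3`. The average of `f` over `[0, r]` is then at least
`f(r) − Λ r² / 3` and `∫₀ʳ f s² ≤ f(r) r³ / 3`, so
`2 r G(r) ≤ Λ r² / 3 − (2/3) Λ f(r) r² ≤ −Λ r² / 3`.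
-/

noncomputable section

open Real Set

/-- Radial average `h̄(r) = (1/r)∫₀ʳ h(s) ds`, with `h̄(0) = h(0)`. -/
def radAvg1 (h : ℝ → ℝ) (r : ℝ) : ℝ :=
  if r = 0 then h 0 else (1 / r) * ∫ s in (0:ℝ)..r, h s

/-- Metric coefficient `f(r) = exp((κ/2)∫₀ʳ (h−h̄)²/s ds)`. -/
def metricF1 (κ : ℝ) (h : ℝ → ℝ) (r : ℝ) : ℝ :=
  Real.exp ((κ / 2) * ∫ s in (0:ℝ)..r, (h s - radAvg1 h s) ^ 2 / s)

/-- Metric coefficient `f̃(r) = (1/r)∫₀ʳ f ds − (Λ/r)∫₀ʳ f s² ds`. -/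
def metricFt1 (Λ κ : ℝ) (h : ℝ → ℝ) (r : ℝ) : ℝ :=
  (1 / r) * (∫ s in (0:ℝ)..r, metricF1 κ h s)
    - (Λ / r) * (∫ s in (0:ℝ)..r, metricF1 κ h s * s ^ 2)

/-- Zeroth order coefficient `G(r) = (1/(2r))[(f − f̃) − Λ f r²]`. -/
def coefG1 (Λ κ : ℝ) (h : ℝ → ℝ) (r : ℝ) : ℝ :=
  (1 / (2 * r)) * ((metricF1 κ h r - metricFt1 Λ κ h r) - Λ * metricF1 κ h r * r ^ 2)

open intervalIntegral

lemma exp_sub_one_le_mul_exp (x : ℝ) : exp x - 1 ≤ x * exp x := by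
  have h := mul_le_mul_of_nonneg_right (add_one_le_exp (-x)) (exp_pos x).le
  rw [← exp_add, neg_add_cancel, exp_zero] at h
  linarith

lemma radAvg1_of_ne_zero (h : ℝ → ℝ) {s : ℝ} (hs : s ≠ 0) :
    radAvg1 h s = (1 / s) * ∫ t in (0:ℝ)..s, h t := if_neg hs

lemma abs_sub_radAvg1_le {h : ℝ → ℝ} {M s : ℝ} (hs : 0 ≤ s)
    (hcont : ContinuousOn h (Icc 0 s)) (hlip : ∀ t ∈ Icc 0 s, |h s - h t| ≤ M * (s - t)) :
    |h s - radAvg1 h s| ≤ M * s / 2 := by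
  rcases hs.eq_or_lt with rfl | hs
  · simp [radAvg1]
  have hdiff : h s - radAvg1 h s = (1 / s) * ∫ t in (0:ℝ)..s, (h s - h t) := by
    rw [radAvg1_of_ne_zero h hs.ne', integral_sub intervalIntegrable_const
      (hcont.intervalIntegrable_of_Icc hs.le), integral_const]
    field_simp
    ring
  have hint : ‖∫ t in (0:ℝ)..s, (h s - h t)‖ ≤ ∫ t in (0:ℝ)..s, M * (s - t) :=
    norm_integral_le_of_norm_le hs.le
      (.of_forall fun t ht => hlip t (Ioc_subset_Icc_self ht))
      ((by fun_prop : Continuous fun t => M * (s - t)).intervalIntegrable _ _)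
  have hlin : ∫ t in (0:ℝ)..s, M * (s - t) = M * s ^ 2 / 2 := by
    simp only [integral_const_mul, integral_sub intervalIntegrable_const
      intervalIntegrable_id, integral_const, integral_id, sub_zero, smul_eq_mul]
    ring
  rw [hdiff, abs_mul, abs_of_pos (one_div_pos.2 hs)]
  calc 1 / s * |∫ t in (0:ℝ)..s, (h s - h t)| ≤ 1 / s * (M * s ^ 2 / 2) := by
        gcongr; exact hlin ▸ hint
    _ = M * s / 2 := by field_simp

def radDefect (h : ℝ → ℝ) (s : ℝ) : ℝ := (h s - radAvg1 h s) ^ 2 / s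

lemma metricF1_eq (κ : ℝ) (h : ℝ → ℝ) (r : ℝ) :
    metricF1 κ h r = exp (κ / 2 * ∫ s in (0:ℝ)..r, radDefect h s) := rfl

lemma radDefect_nonneg (h : ℝ → ℝ) {s : ℝ} (hs : 0 ≤ s) : 0 ≤ radDefect h s :=
  div_nonneg (sq_nonneg _) hs

lemma continuousOn_radAvg1 {h : ℝ → ℝ} {r : ℝ} (hcont : ContinuousOn h (Icc 0 r)) :
    ContinuousOn (radAvg1 h) (Ioc 0 r) := by
  rcases lt_or_ge r 0 with hr | hr
  · simp [Ioc_eq_empty_of_le hr.le]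
  have hprim : ContinuousOn (fun s => ∫ t in (0:ℝ)..s, h t) (Icc 0 r) := by
    simpa only [uIcc_of_le hr] using continuousOn_primitive_interval
      ((hcont.integrableOn_compact isCompact_Icc).mono_set (uIcc_of_le hr).subset)
  refine ContinuousOn.congr (f := fun s => (1 / s) * ∫ t in (0:ℝ)..s, h t) ?_
    fun s hs => radAvg1_of_ne_zero h hs.1.ne'
  exact (continuousOn_const.div continuousOn_id fun s hs => hs.1.ne').mul
    (hprim.mono Ioc_subset_Icc_self)

lemma radDefect_le {h : ℝ → ℝ} {M r s : ℝ} (hcont : ContinuousOn h (Icc 0 r))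
    (hlip : ∀ x ∈ Icc 0 r, ∀ y ∈ Icc 0 r, |h x - h y| ≤ M * |x - y|) (hs : s ∈ Icc 0 r) :
    radDefect h s ≤ M ^ 2 * s / 4 := by
  rcases hs.1.eq_or_lt with rfl | hs0
  · simp [radDefect]
  have hsub : Icc 0 s ⊆ Icc 0 r := Icc_subset_Icc le_rfl hs.2
  have hmean := abs_sub_radAvg1_le hs.1 (hcont.mono hsub) fun t ht => by
    simpa only [abs_of_nonneg (sub_nonneg.2 ht.2)] using hlip s hs t (hsub ht)
  have hsq : (h s - radAvg1 h s) ^ 2 ≤ (M * s / 2) ^ 2 :=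
    sq_le_sq' (abs_le.1 hmean).1 (abs_le.1 hmean).2
  calc radDefect h s ≤ (M * s / 2) ^ 2 / s := div_le_div_of_nonneg_right hsq hs0.le
    _ = M ^ 2 * s / 4 := by field_simp; ring

lemma intervalIntegrable_radDefect {h : ℝ → ℝ} {M r : ℝ} (hr : 0 ≤ r)
    (hcont : ContinuousOn h (Icc 0 r))
    (hlip : ∀ x ∈ Icc 0 r, ∀ y ∈ Icc 0 r, |h x - h y| ≤ M * |x - y|) :
    IntervalIntegrable (radDefect h) MeasureTheory.volume 0 r := by
  have hmeas : ContinuousOn (radDefect h) (Ioc 0 r) :=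
    (((hcont.mono Ioc_subset_Icc_self).sub (continuousOn_radAvg1 hcont)).pow 2).div
      continuousOn_id fun s hs => hs.1.ne'
  refine IntervalIntegrable.mono_fun' (g := fun s => M ^ 2 * s / 4)
    ((by fun_prop : Continuous fun s => M ^ 2 * s / 4).intervalIntegrable _ _) ?_ ?_
  · rw [uIoc_of_le hr]
    exact hmeas.aestronglyMeasurable measurableSet_Ioc
  · rw [uIoc_of_le hr]
    refine (MeasureTheory.ae_restrict_iff' measurableSet_Ioc).2 (.of_forall fun s hs => ?_)
    dsimp only
    rw [Real.norm_eq_abs, abs_of_nonneg (radDefect_nonneg h hs.1.le)]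
    exact radDefect_le hcont hlip (Ioc_subset_Icc_self hs)

lemma integral_radDefect_le {h : ℝ → ℝ} {M r : ℝ} (hr : 0 ≤ r)
    (hcont : ContinuousOn h (Icc 0 r))
    (hlip : ∀ x ∈ Icc 0 r, ∀ y ∈ Icc 0 r, |h x - h y| ≤ M * |x - y|) :
    ∫ s in (0:ℝ)..r, radDefect h s ≤ M ^ 2 * r ^ 2 / 8 :=
  calc ∫ s in (0:ℝ)..r, radDefect h s ≤ ∫ s in (0:ℝ)..r, M ^ 2 / 4 * s :=
        integral_mono_on hr (intervalIntegrable_radDefect hr hcont hlip)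
          (intervalIntegrable_id.const_mul _) fun s hs =>
            (radDefect_le hcont hlip hs).trans_eq (by ring)
    _ = M ^ 2 * r ^ 2 / 8 := by rw [integral_const_mul, integral_id]; ring

lemma one_le_metricF1 {κ : ℝ} (hκ : 0 ≤ κ) (h : ℝ → ℝ) {s : ℝ} (hs : 0 ≤ s) :
    1 ≤ metricF1 κ h s :=
  one_le_exp (mul_nonneg (by positivity)
    (integral_nonneg hs fun t ht => radDefect_nonneg h ht.1))

lemma monotoneOn_metricF1 {κ r : ℝ} {h : ℝ → ℝ} (hκ : 0 ≤ κ)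
    (hint : IntervalIntegrable (radDefect h) MeasureTheory.volume 0 r) :
    MonotoneOn (metricF1 κ h) (Icc 0 r) := by
  intro a ha b hb hab
  have hnonneg : 0 ≤ᵐ[MeasureTheory.volume.restrict (Ioc 0 b)] radDefect h :=
    (MeasureTheory.ae_restrict_iff' measurableSet_Ioc).2
      (.of_forall fun s hs => radDefect_nonneg h hs.1.le)
  have hint_b : IntervalIntegrable (radDefect h) MeasureTheory.volume 0 b :=
    hint.mono_set <| by
      rw [uIcc_of_le hb.1, uIcc_of_le (hb.1.trans hb.2)]
      exact Icc_subset_Icc le_rfl hb.2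
  exact exp_le_exp.2 (mul_le_mul_of_nonneg_left
    (integral_mono_interval le_rfl ha.1 hab hnonneg hint_b) (by positivity))

lemma continuousOn_metricF1 {κ r : ℝ} {h : ℝ → ℝ} (hr : 0 ≤ r)
    (hint : IntervalIntegrable (radDefect h) MeasureTheory.volume 0 r) :
    ContinuousOn (metricF1 κ h) (Icc 0 r) := by
  have hprim := continuousOn_primitive_interval' hint left_mem_uIcc
  rw [uIcc_of_le hr] at hprim
  exact continuous_exp.comp_continuousOn (continuousOn_const.mul hprim)

lemma metricF1_sub_one_le {κ M r : ℝ} {h : ℝ → ℝ} (hκ : 0 ≤ κ) (hr : 0 ≤ r)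
    (hcont : ContinuousOn h (Icc 0 r))
    (hlip : ∀ x ∈ Icc 0 r, ∀ y ∈ Icc 0 r, |h x - h y| ≤ M * |x - y|) :
    metricF1 κ h r - 1 ≤ κ * M ^ 2 * r ^ 2 / 16 * exp (κ * M ^ 2 * r ^ 2 / 16) := by
  have hexp_le : κ / 2 * ∫ s in (0:ℝ)..r, radDefect h s ≤ κ * M ^ 2 * r ^ 2 / 16 :=
    calc κ / 2 * ∫ s in (0:ℝ)..r, radDefect h s ≤ κ / 2 * (M ^ 2 * r ^ 2 / 8) := by
          gcongr; exact integral_radDefect_le hr hcont hlip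
      _ = κ * M ^ 2 * r ^ 2 / 16 := by ring
  have hexp_nonneg : 0 ≤ κ / 2 * ∫ s in (0:ℝ)..r, radDefect h s :=
    mul_nonneg (by positivity) (integral_nonneg hr fun t ht => radDefect_nonneg h ht.1)
  rw [metricF1_eq]
  exact (exp_sub_one_le_mul_exp _).trans
    (mul_le_mul hexp_le (exp_le_exp.2 hexp_le) (exp_pos _).le (hexp_nonneg.trans hexp_le))

lemma coefG1_le {Λ κ r : ℝ} {h : ℝ → ℝ} (hΛ : 0 ≤ Λ) (hr : 0 < r)
    (hcont : ContinuousOn (metricF1 κ h) (Icc 0 r))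
    (hmono : MonotoneOn (metricF1 κ h) (Icc 0 r))
    (hone : ∀ s ∈ Icc 0 r, 1 ≤ metricF1 κ h s)
    (hosc : metricF1 κ h r - 1 ≤ Λ / 3 * r ^ 2) :
    coefG1 Λ κ h r ≤ -(Λ / 6) * r := by
  set f := metricF1 κ h
  have hr_mem : r ∈ Icc 0 r := right_mem_Icc.2 hr.le
  have hmean : f r - Λ / 3 * r ^ 2 ≤ 1 / r * ∫ s in (0:ℝ)..r, f s := by
    have hint : ∫ _ in (0:ℝ)..r, (f r - Λ / 3 * r ^ 2) ≤ ∫ s in (0:ℝ)..r, f s :=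
      integral_mono_on hr.le intervalIntegrable_const (hcont.intervalIntegrable_of_Icc hr.le)
        fun s hs => by linarith [hone s hs]
    rw [integral_const, smul_eq_mul, sub_zero] at hint
    rw [one_div_mul_eq_div, le_div_iff₀ hr]
    linarith
  have hmoment : Λ / r * ∫ s in (0:ℝ)..r, f s * s ^ 2 ≤ Λ / 3 * f r * r ^ 2 := by
    have hint : ∫ s in (0:ℝ)..r, f s * s ^ 2 ≤ ∫ s in (0:ℝ)..r, f r * s ^ 2 :=
      integral_mono_on hr.le ((hcont.mul (continuousOn_pow 2)).intervalIntegrable_of_Icc hr.le)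
        ((continuous_pow 2).intervalIntegrable _ _ |>.const_mul _) fun s hs =>
          mul_le_mul_of_nonneg_right (hmono hs hr_mem hs.2) (sq_nonneg s)
    rw [integral_const_mul, integral_pow] at hint
    norm_num at hint
    calc Λ / r * ∫ s in (0:ℝ)..r, f s * s ^ 2 ≤ Λ / r * (f r * (r ^ 3 / 3)) := by
          gcongr
      _ = Λ / 3 * f r * r ^ 2 := by field_simp
  have hbracket : (f r - metricFt1 Λ κ h r) - Λ * f r * r ^ 2 ≤ -(Λ / 3) * r ^ 2 := by
    have hfr : 0 ≤ Λ * r ^ 2 * (f r - 1) :=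
      mul_nonneg (by positivity) (sub_nonneg.2 (hone r hr_mem))
    rw [metricFt1]
    linarith
  calc coefG1 Λ κ h r = 1 / (2 * r) * ((f r - metricFt1 Λ κ h r) - Λ * f r * r ^ 2) := rfl
    _ ≤ 1 / (2 * r) * (-(Λ / 3) * r ^ 2) := by gcongr
    _ = -(Λ / 6) * r := by field_simp; ring

theorem coefG_negative_linear_bound_general
    (Λ κ R : ℝ) (hΛ : 0 < Λ) (hκ : 0 < κ) (h h' : ℝ → ℝ)
    (hd : ∀ r ∈ Icc (0:ℝ) R, HasDerivWithinAt h (h' r) (Icc 0 R) r)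
    (hc : ContinuousOn h' (Icc 0 R))
    (hsmall : Real.exp (κ * (sSup ((fun s => |h' s|) '' Icc 0 R)) ^ 2 * R ^ 2 / 16)
        * κ * (sSup ((fun s => |h' s|) '' Icc 0 R)) ^ 2 / 16 ≤ Λ / 3) :
    ∀ r ∈ Ioc (0:ℝ) R, coefG1 Λ κ h r ≤ -(Λ / 6) * r := by
  intro r ⟨hr, hrR⟩
  set M := sSup ((fun s => |h' s|) '' Icc 0 R)
  have hsub : Icc 0 r ⊆ Icc 0 R := Icc_subset_Icc le_rfl hrR
  have hcont : ContinuousOn h (Icc 0 r) := fun x hx => (hd x (hsub hx)).continuousWithinAt.mono hsub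
  have hlip : ∀ x ∈ Icc 0 r, ∀ y ∈ Icc 0 r, |h x - h y| ≤ M * |x - y| := fun x hx y hy =>
    convex_Icc 0 R |>.norm_image_sub_le_of_norm_hasDerivWithin_le hd
      (fun s hs => le_csSup (isCompact_Icc.bddAbove_image hc.abs) ⟨s, hs, rfl⟩) (hsub hy) (hsub hx)
  have hint := intervalIntegrable_radDefect hr.le hcont hlip
  have hosc : metricF1 κ h r - 1 ≤ Λ / 3 * r ^ 2 :=
    calc metricF1 κ h r - 1 ≤ κ * M ^ 2 * r ^ 2 / 16 * exp (κ * M ^ 2 * r ^ 2 / 16) :=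
          metricF1_sub_one_le hκ.le hr.le hcont hlip
      _ ≤ κ * M ^ 2 * r ^ 2 / 16 * exp (κ * M ^ 2 * R ^ 2 / 16) := by gcongr
      _ = exp (κ * M ^ 2 * R ^ 2 / 16) * κ * M ^ 2 / 16 * r ^ 2 := by ring
      _ ≤ Λ / 3 * r ^ 2 := by gcongr
  exact coefG1_le hΛ.le hr (continuousOn_metricF1 hr.le hint) (monotoneOn_metricF1 hκ.le hint)
    (fun s hs => one_le_metricF1 hκ.le h hs.1) hosc

/-- For `h ∈ C¹([0,R])` with `M = sup|h'|` and `K = exp(κM²R²/16)`: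
if `KκM²/16 ≤ Λ/3` then `G(r) ≤ −(Λ/6)r` for `0 < r ≤ R`. -/
theorem coefG_negative_linear_bound
    (Λ κ R : ℝ) (hΛ : 0 < Λ) (hκ : 0 < κ) (hR : 0 < R) (h h' : ℝ → ℝ)
    (hd : ∀ r ∈ Icc (0:ℝ) R, HasDerivWithinAt h (h' r) (Icc 0 R) r)
    (hc : ContinuousOn h' (Icc 0 R))
    (hsmall : Real.exp (κ * (sSup ((fun s => |h' s|) '' Icc 0 R)) ^ 2 * R ^ 2 / 16)
        * κ * (sSup ((fun s => |h' s|) '' Icc 0 R)) ^ 2 / 16 ≤ Λ / 3) :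
    ∀ r ∈ Ioc (0:ℝ) R, coefG1 Λ κ h r ≤ -(Λ / 6) * r :=
  coefG_negative_linear_bound_general Λ κ R hΛ hκ h h' hd hc hsmall
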